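/- Let R be an m × n real matrix, λ > 0, and suppose σ ∈ ℝ^n satisfies the range condition σ = Rᵀ z for some z ∈ ℝ^m. Then the regularization error e = (RᵀR + λ I)^{-1} RᵀR σ − σ satisfies ‖e‖₂ ≤ √λ · ‖z‖₂ / 2 (in particular ‖e‖₂ ≤ C √λ ‖z‖₂ with C independent of λ, σ, z). -/

import Mathlib

open Matrix

/-- Euclidean norm of a vector in `ℝ^k`. -/
noncomputable def euclNorm {k : ℕ} (v : Fin k → ℝ) : ℝ := Real.sqrt (v ⬝ᵥ v)

/-!
The error is `e = -λ w` with `w = (RᵀR + λ)⁻¹ Rᵀ z`. Pairing the normal equation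
`(RᵀR + λ) w = Rᵀ z` with `w` gives `‖R w‖² + λ ‖w‖² = ⟨R w, z⟩ ≤ ‖R w‖ ‖z‖`, and since
`a b - a² ≤ b² / 4` this yields `λ ‖w‖² ≤ ‖z‖² / 4`, i.e. `‖e‖ = λ ‖w‖ ≤ √λ ‖z‖ / 2`.
This is the SVD-free form of the bound `λ s / (s² + λ) ≤ √λ / 2`.
-/

section EuclNorm

variable {k : ℕ}

theorem euclNorm_eq_norm_toLp (v : Fin k → ℝ) : euclNorm v = ‖WithLp.toLp 2 v‖ := by
  rw [norm_eq_sqrt_real_inner, EuclideanSpace.inner_toLp_toLp, star_trivial]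
  rfl

theorem euclNorm_nonneg (v : Fin k → ℝ) : 0 ≤ euclNorm v := Real.sqrt_nonneg _

theorem dotProduct_self_eq_euclNorm_sq (v : Fin k → ℝ) : v ⬝ᵥ v = euclNorm v ^ 2 :=
  (Real.sq_sqrt (dotProduct_self_star_nonneg v)).symm

theorem dotProduct_le_euclNorm_mul_euclNorm (u v : Fin k → ℝ) :
    u ⬝ᵥ v ≤ euclNorm u * euclNorm v := by
  simpa [euclNorm_eq_norm_toLp, EuclideanSpace.inner_toLp_toLp, dotProduct_comm] using
    real_inner_le_norm (WithLp.toLp 2 u) (WithLp.toLp 2 v)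

theorem euclNorm_smul (c : ℝ) (v : Fin k → ℝ) : euclNorm (c • v) = |c| * euclNorm v := by
  simp only [euclNorm_eq_norm_toLp, WithLp.toLp_smul, norm_smul, Real.norm_eq_abs]

end EuclNorm

section Tikhonov

variable {m n K : Type*} [Fintype m] [Fintype n] [DecidableEq n]

theorem posDef_transpose_mul_self_add_smul_one (R : Matrix m n ℝ) {lam : ℝ} (hlam : 0 < lam) :
    (Rᵀ * R + lam • (1 : Matrix n n ℝ)).PosDef :=
  PosDef.posSemidef_add (posSemidef_conjTranspose_mul_self R) (PosDef.one.smul hlam)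

theorem inv_add_smul_one_mulVec_mulVec_sub [CommRing K] {A : Matrix n n K} {c : K}
    (hA : IsUnit (A + c • 1)) (σ : n → K) :
    (A + c • 1)⁻¹ *ᵥ (A *ᵥ σ) - σ = -c • ((A + c • 1)⁻¹ *ᵥ σ) := by
  have hdet := (isUnit_iff_isUnit_det _).mp hA
  have hσ : σ = (A + c • 1)⁻¹ *ᵥ ((A + c • 1) *ᵥ σ) := by
    rw [mulVec_mulVec, nonsing_inv_mul _ hdet, one_mulVec]
  conv_lhs => rw [show A *ᵥ σ = (A + c • 1) *ᵥ σ - c • σ by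
    rw [add_mulVec, smul_mulVec, one_mulVec, add_sub_cancel_right]]
  rw [mulVec_sub, ← hσ, mulVec_smul, neg_smul, sub_sub_cancel_left]

theorem dotProduct_mulVec_add_smul_eq_of_normal_eq [CommRing K] (R : Matrix m n K) {lam : K}
    {w : n → K} {z : m → K} (hw : (Rᵀ * R + lam • 1) *ᵥ w = Rᵀ *ᵥ z) :
    R *ᵥ w ⬝ᵥ R *ᵥ w + lam * (w ⬝ᵥ w) = R *ᵥ w ⬝ᵥ z := by
  have hT (u : m → K) : w ⬝ᵥ Rᵀ *ᵥ u = R *ᵥ w ⬝ᵥ u := by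
    rw [dotProduct_mulVec, vecMul_transpose]
  have h := congrArg (w ⬝ᵥ ·) hw
  simpa only [add_mulVec, smul_mulVec, one_mulVec, dotProduct_add, dotProduct_smul, smul_eq_mul,
    ← mulVec_mulVec, hT] using h

end Tikhonov

theorem le_sq_div_four_of_sq_add_le_mul {a b c : ℝ} (h : a ^ 2 + c ≤ a * b) : c ≤ b ^ 2 / 4 := by
  nlinarith [sq_nonneg (a - b / 2)]

theorem mul_euclNorm_le_of_normal_eq {m n : ℕ} (R : Matrix (Fin m) (Fin n) ℝ) {lam : ℝ}
    (hlam : 0 < lam) {w : Fin n → ℝ} {z : Fin m → ℝ}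
    (hw : (Rᵀ * R + lam • 1) *ᵥ w = Rᵀ *ᵥ z) :
    lam * euclNorm w ≤ Real.sqrt lam * euclNorm z / 2 := by
  have hsq : lam * euclNorm w ^ 2 ≤ euclNorm z ^ 2 / 4 := by
    apply le_sq_div_four_of_sq_add_le_mul (a := euclNorm (R *ᵥ w))
    rw [← dotProduct_self_eq_euclNorm_sq, ← dotProduct_self_eq_euclNorm_sq,
      dotProduct_mulVec_add_smul_eq_of_normal_eq R hw]
    exact dotProduct_le_euclNorm_mul_euclNorm _ _
  have hroot : Real.sqrt lam * euclNorm w ≤ euclNorm z / 2 := by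
    rw [← pow_le_pow_iff_left₀ (mul_nonneg (Real.sqrt_nonneg _) (euclNorm_nonneg w))
      (div_nonneg (euclNorm_nonneg z) zero_le_two) two_ne_zero, mul_pow, Real.sq_sqrt hlam.le]
    linarith
  calc lam * euclNorm w = Real.sqrt lam * (Real.sqrt lam * euclNorm w) := by
        rw [← mul_assoc, Real.mul_self_sqrt hlam.le]
    _ ≤ Real.sqrt lam * (euclNorm z / 2) := by gcongr
    _ = Real.sqrt lam * euclNorm z / 2 := by ring

/-- Tikhonov regularization error under the range (source) condition
`σ = Rᵀ z`: the error `e = (RᵀR + λI)⁻¹ RᵀR σ − σ` satisfies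
`‖e‖₂ ≤ √λ ‖z‖₂ / 2`. -/
theorem tikhonov_regularization_error (m n : ℕ) (R : Matrix (Fin m) (Fin n) ℝ)
    (lam : ℝ) (hlam : 0 < lam) (σ : Fin n → ℝ) (z : Fin m → ℝ)
    (hrange : σ = Rᵀ.mulVec z) :
    euclNorm
      ((Rᵀ * R + lam • (1 : Matrix (Fin n) (Fin n) ℝ))⁻¹.mulVec ((Rᵀ * R).mulVec σ) - σ) ≤
      Real.sqrt lam * euclNorm z / 2 := by
  have hM := (posDef_transpose_mul_self_add_smul_one R hlam).isUnit
  have hw : (Rᵀ * R + lam • 1) *ᵥ ((Rᵀ * R + lam • 1)⁻¹ *ᵥ σ) = Rᵀ *ᵥ z := by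
    rw [mulVec_mulVec, mul_nonsing_inv _ ((isUnit_iff_isUnit_det _).mp hM), one_mulVec, hrange]
  rw [inv_add_smul_one_mulVec_mulVec_sub hM, euclNorm_smul, abs_neg, abs_of_pos hlam]
  exact mul_euclNorm_le_of_normal_eq R hlam hw
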